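/- Let base : O → ℤ assign a base address to every memory object, and suppose unification pairs are sound in the sense that a pair ((o,f),(o',f')) asserts base o + f = base o' + f'. If ((o₁,f₁),(o₂,f₂)) and ((o₃,f₃),(o₂,f₄)) are sound unification pairs, then the pair ((o₁,f₅),(o₃,f₆)) produced by the transitive-closure rule is also sound, where f₅ and f₆ are defined by: if f₄ ≥ f₂ then f₅ = f₁ and f₆ = f₃ − (f₄ − f₂), and otherwise f₅ = f₁ − (f₂ − f₄) and f₆ = f₃. That is, base o₁ + f₅ = base o₃ + f₆. -/
import Mathlib


/-- Soundness of the transitive-closure rule for unification pairs.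
A unification pair `((o,f),(o',f'))` is sound when `base o + f = base o' + f'`.
Given sound pairs `((o₁,f₁),(o₂,f₂))` and `((o₃,f₃),(o₂,f₄))`, the produced pair
`((o₁,f₅),(o₃,f₆))` (with `f₅`, `f₆` as defined by the rule) is also sound. -/
theorem transitive_closure_sound {O : Type*} (base : O → ℤ)
    (o₁ o₂ o₃ : O) (f₁ f₂ f₃ f₄ f₅ f₆ : ℤ)
    (h₁ : base o₁ + f₁ = base o₂ + f₂)
    (h₂ : base o₃ + f₃ = base o₂ + f₄)
    (h₅ : f₅ = if f₄ ≥ f₂ then f₁ else f₁ - (f₂ - f₄))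
    (h₆ : f₆ = if f₄ ≥ f₂ then f₃ - (f₄ - f₂) else f₃) :
    base o₁ + f₅ = base o₃ + f₆ := by
  subst h₅ h₆; split <;> omega
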